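/- arXiv:1505.01175 — 4 statements merged into one kernel-verified Lean document; each statement's English description precedes it below -/
import Mathlib

section
/- Let G be a group and define P^k(G) to be the set of functions f : G → ℂ such that ∂_{u_1}⋯∂_{u_{k+1}} f = 0 for all u_1,…,u_{k+1} ∈ G. If f ∈ P^k(G) and h ∈ P^m(G), then the pointwise product f·h lies in P^{k+m}(G). -/
/-- Left derivative: `∂_u f (z) = f (u z) - f z`. -/
def lderiv {G : Type*} [Group G] (u : G) (f : G → ℂ) : G → ℂ := fun z => f (u * z) - f z

/-- `f ∈ P^k(G)`: all `(k+1)`-fold left derivatives of `f` vanish identically. -/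
def IsPolyOfDeg {G : Type*} [Group G] (k : ℕ) (f : G → ℂ) : Prop :=
  ∀ us : List G, us.length = k + 1 → us.foldr lderiv f = 0

section Aux

variable {G : Type*} [Group G]

/-- Left translation. -/
def tauG (v : G) (f : G → ℂ) : G → ℂ := fun z => f (v * z)

lemma lderiv_zero (u : G) : lderiv u (0 : G → ℂ) = 0 := by
  funext z; simp [lderiv]

lemma lderiv_add (u : G) (f g : G → ℂ) :
    lderiv u (f + g) = lderiv u f + lderiv u g := by
  funext z; simp [lderiv]; ring

lemma foldr_lderiv_zero (us : List G) : us.foldr lderiv (0 : G → ℂ) = 0 := by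
  induction us with
  | nil => rfl
  | cons u us ih => simp [List.foldr, ih, lderiv_zero]

lemma isPoly_zero (k : ℕ) : IsPolyOfDeg k (0 : G → ℂ) := by
  intro us _; exact foldr_lderiv_zero us

lemma foldr_lderiv_add (us : List G) (f g : G → ℂ) :
    us.foldr lderiv (f + g) = us.foldr lderiv f + us.foldr lderiv g := by
  induction us with
  | nil => rfl
  | cons u us ih => simp [List.foldr, ih, lderiv_add]

lemma isPoly_add {k : ℕ} {f g : G → ℂ} (hf : IsPolyOfDeg k f) (hg : IsPolyOfDeg k g) :
    IsPolyOfDeg k (f + g) := by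
  intro us hus
  rw [foldr_lderiv_add, hf us hus, hg us hus, add_zero]

lemma lderiv_tau (u v : G) (f : G → ℂ) :
    lderiv u (tauG v f) = tauG v (lderiv (v * u * v⁻¹) f) := by
  funext z
  simp only [lderiv, tauG]
  congr 2
  group

lemma tau_zero (v : G) : tauG v (0 : G → ℂ) = 0 := rfl

lemma foldr_lderiv_tau (us : List G) (v : G) (f : G → ℂ) :
    us.foldr lderiv (tauG v f) =
      tauG v ((us.map (fun u => v * u * v⁻¹)).foldr lderiv f) := by
  induction us with
  | nil => rfl
  | cons u us ih => simp [List.foldr, ih, lderiv_tau]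

lemma isPoly_tau {k : ℕ} {f : G → ℂ} (v : G) (hf : IsPolyOfDeg k f) :
    IsPolyOfDeg k (tauG v f) := by
  intro us hus
  rw [foldr_lderiv_tau, hf _ (by simp [hus]), tau_zero]

lemma lderiv_mul (u : G) (f h : G → ℂ) :
    lderiv u (f * h) = lderiv u f * tauG u h + f * lderiv u h := by
  funext z
  simp only [lderiv, tauG, Pi.mul_apply, Pi.add_apply]
  ring

lemma isPoly_succ_iff {k : ℕ} {g : G → ℂ} :
    IsPolyOfDeg (k + 1) g ↔ ∀ u : G, IsPolyOfDeg k (lderiv u g) := by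
  constructor
  · intro hg u us hus
    have := hg (us ++ [u]) (by simp [hus])
    simpa [List.foldr_append] using this
  · intro hg us hus
    rcases us.eq_nil_or_concat with rfl | ⟨us', u, rfl⟩
    · exact absurd hus (by simp)
    · simp only [List.concat_eq_append, List.length_append, List.length_singleton] at hus
      have hlen : us'.length = k + 1 := by omega
      simp only [List.concat_eq_append]
      have := hg u us' hlen
      simpa [List.foldr_append] using this

lemma isPoly_mul_aux (n : ℕ) :
    ∀ (k m : ℕ) (f h : G → ℂ), k + m = n → IsPolyOfDeg k f → IsPolyOfDeg m h →
      IsPolyOfDeg n (f * h) := by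
  induction n with
  | zero =>
    intro k m f h hkm hf hh
    obtain ⟨rfl, rfl⟩ : k = 0 ∧ m = 0 := by omega
    intro us hus
    match us, hus with
    | [u], _ =>
      have h1 : lderiv u f = 0 := hf [u] rfl
      have h2 : lderiv u h = 0 := hh [u] rfl
      simp [List.foldr, lderiv_mul, h1, h2]
  | succ n ih =>
    intro k m f h hkm hf hh
    rw [isPoly_succ_iff]
    intro u
    rw [lderiv_mul]
    apply isPoly_add
    · rcases k with _ | k'
      · have h1 : lderiv u f = 0 := hf [u] rfl
        rw [h1, zero_mul]
        exact isPoly_zero n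
      · have h1 : IsPolyOfDeg k' (lderiv u f) := (isPoly_succ_iff.mp hf) u
        exact ih k' m _ _ (by omega) h1 (isPoly_tau u hh)
    · rcases m with _ | m'
      · have h2 : lderiv u h = 0 := hh [u] rfl
        rw [h2, mul_zero]
        exact isPoly_zero n
      · have h2 : IsPolyOfDeg m' (lderiv u h) := (isPoly_succ_iff.mp hh) u
        exact ih k m' _ _ (by omega) hf h2

end Aux

/-- If `f ∈ P^k(G)` and `h ∈ P^m(G)` then the pointwise product `f h ∈ P^{k+m}(G)`. -/
theorem isPolyOfDeg_mul {G : Type*} [Group G] {k m : ℕ} {f h : G → ℂ}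
    (hf : IsPolyOfDeg k f) (hh : IsPolyOfDeg m h) :
    IsPolyOfDeg (k + m) (f * h) := by
  exact isPoly_mul_aux (k + m) k m f h rfl hf hh
end

section
/- Let G be a group and let 𝐺̄_i = {c ∈ G : ∃ n ≥ 1, cⁿ ∈ G_i} be the generalized commutator subgroups. If x ∈ 𝐺̄_i and y ∈ 𝐺̄_j then the commutator [x,y] = x⁻¹y⁻¹xy lies in 𝐺̄_{i+j}. -/
open Subgroup QuotientGroup

open scoped commutatorElement

universe u

variable {G : Type u} [Group G]

/-- Commutator expansion: `⁅a*b, c⁆ = a * ⁅b,c⁆ * a⁻¹ * ⁅a,c⁆`. -/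
lemma comm_mul_left (a b c : G) : ⁅a * b, c⁆ = a * ⁅b, c⁆ * a⁻¹ * ⁅a, c⁆ := by
  simp only [commutatorElement_def]; group

/-- Lower central series of a quotient group is the image of the lower central series. -/
lemma lcs_quot (N : Subgroup G) [N.Normal] (n : ℕ) :
    (⊤ : Subgroup (G ⧸ N)).lowerCentralSeries n
      = Subgroup.map (QuotientGroup.mk' N) ((⊤ : Subgroup G).lowerCentralSeries n) := by
  induction n with
  | zero =>
    simp [Subgroup.lowerCentralSeries, Subgroup.map_top_of_surjective _ (mk'_surjective N)]
  | succ n ih =>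
    show ⁅(⊤ : Subgroup (G ⧸ N)).lowerCentralSeries n, ⊤⁆ = _
    rw [ih, ← Subgroup.map_top_of_surjective (QuotientGroup.mk' N) (mk'_surjective N),
      ← Subgroup.map_commutator]
    rfl

lemma lcs_quot_bot {N : Subgroup G} [N.Normal] {n : ℕ} (h : (⊤ : Subgroup G).lowerCentralSeries n ≤ N) :
    (⊤ : Subgroup (G ⧸ N)).lowerCentralSeries n = ⊥ := by
  rw [lcs_quot, Subgroup.map_eq_bot_iff, QuotientGroup.ker_mk']
  exact h

lemma mem_lcs_quot {N : Subgroup G} [N.Normal] {n : ℕ} {g : G}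
    (h : g ∈ (⊤ : Subgroup G).lowerCentralSeries n) :
    (g : G ⧸ N) ∈ (⊤ : Subgroup (G ⧸ N)).lowerCentralSeries n := by
  rw [lcs_quot]
  exact ⟨g, h, rfl⟩

/-- `⁅γ_a, γ_b⁆ = ⊥` in groups where `γ_{a+b+1} = ⊥`. -/
lemma lcs_comm_bot : ∀ (b a : ℕ) {G : Type u} [Group G],
    (⊤ : Subgroup G).lowerCentralSeries (a + b + 1) = ⊥ →
    ⁅(⊤ : Subgroup G).lowerCentralSeries a, (⊤ : Subgroup G).lowerCentralSeries b⁆ = ⊥ := by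
  intro b
  induction b with
  | zero =>
    intro a G _ h
    have : (⊤ : Subgroup G).lowerCentralSeries (a + 1) = ⁅(⊤ : Subgroup G).lowerCentralSeries a, ⊤⁆ := rfl
    rw [Subgroup.lowerCentralSeries_zero, ← this]
    exact h
  | succ b ih =>
    -- the `≤` form at level `b`, over all groups
    have L : ∀ (a' : ℕ) (G' : Type u) [Group G'],
        ⁅(⊤ : Subgroup G').lowerCentralSeries a', (⊤ : Subgroup G').lowerCentralSeries b⁆
          ≤ (⊤ : Subgroup G').lowerCentralSeries (a' + b + 1) := by
      intro a' G' _
      set N := (⊤ : Subgroup G').lowerCentralSeries (a' + b + 1)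
      have hbot : (⊤ : Subgroup (G' ⧸ N)).lowerCentralSeries (a' + b + 1) = ⊥ := lcs_quot_bot le_rfl
      have h2 := ih a' hbot
      rw [lcs_quot, lcs_quot, ← Subgroup.map_commutator, Subgroup.map_eq_bot_iff,
        QuotientGroup.ker_mk'] at h2
      exact h2
    intro a G _ h
    have hsucc : (⊤ : Subgroup G).lowerCentralSeries (b + 1) = ⁅(⊤ : Subgroup G).lowerCentralSeries b, ⊤⁆ := rfl
    rw [hsucc, Subgroup.commutator_comm]
    apply Subgroup.commutator_commutator_eq_bot_of_rotate
    · -- ⁅γ_b, ⁅⊤, γ_a⁆⁆ = ⊥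
      have e1 : (⁅(⊤ : Subgroup G), (⊤ : Subgroup G).lowerCentralSeries a⁆ : Subgroup G)
          = (⊤ : Subgroup G).lowerCentralSeries (a + 1) :=
        (Subgroup.commutator_comm _ _).trans rfl
      rw [e1]
      apply ih (a + 1)
      rw [show a + 1 + b + 1 = a + (b + 1) + 1 by omega]
      exact h
    · -- ⁅⁅γ_a, γ_b⁆, ⊤⁆ = ⊥
      rw [eq_bot_iff]
      calc ⁅⁅(⊤ : Subgroup G).lowerCentralSeries a, (⊤ : Subgroup G).lowerCentralSeries b⁆, (⊤ : Subgroup G)⁆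
          ≤ ⁅(⊤ : Subgroup G).lowerCentralSeries (a + b + 1), (⊤ : Subgroup G)⁆ :=
            Subgroup.commutator_mono (L a G) le_rfl
        _ = (⊤ : Subgroup G).lowerCentralSeries (a + b + 2) := rfl
        _ = ⊥ := by rw [show a + b + 2 = a + (b + 1) + 1 by omega]; exact h
        _ ≤ ⊥ := le_rfl

/-- `⁅γ_a, γ_b⁆ ≤ γ_{a+b+1}`. -/
lemma lcs_comm_le (a b : ℕ) {G : Type u} [Group G] :
    ⁅(⊤ : Subgroup G).lowerCentralSeries a, (⊤ : Subgroup G).lowerCentralSeries b⁆ ≤ (⊤ : Subgroup G).lowerCentralSeries (a + b + 1) := by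
  set N := (⊤ : Subgroup G).lowerCentralSeries (a + b + 1)
  have hbot : (⊤ : Subgroup (G ⧸ N)).lowerCentralSeries (a + b + 1) = ⊥ := lcs_quot_bot le_rfl
  have h2 := lcs_comm_bot b a hbot
  rw [lcs_quot, lcs_quot, ← Subgroup.map_commutator, Subgroup.map_eq_bot_iff,
    QuotientGroup.ker_mk'] at h2
  exact h2

lemma isOfFinOrder_of_pow {g : G} {t : ℕ} (ht : 0 < t) (h : IsOfFinOrder (g ^ t)) :
    IsOfFinOrder g := by
  obtain ⟨k, hk, hk1⟩ := isOfFinOrder_iff_pow_eq_one.mp h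
  exact isOfFinOrder_iff_pow_eq_one.mpr ⟨t * k, by positivity, by rw [pow_mul]; exact hk1⟩

/-- A group with trivial lower central series entry that is generated by torsion elements
is a torsion group. -/
lemma gen_torsion : ∀ (c : ℕ) {G : Type u} [Group G],
    (⊤ : Subgroup G).lowerCentralSeries c = ⊥ →
    Subgroup.closure {x : G | IsOfFinOrder x} = ⊤ →
    ∀ g : G, IsOfFinOrder g := by
  intro c
  induction c with
  | zero =>
    intro G _ hG _ g
    have : g ∈ (⊥ : Subgroup G) := by rw [← hG]; exact Subgroup.mem_top g
    rw [Subgroup.mem_bot] at this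
    simp [this]
  | succ c ih =>
    intro G _ hG hcl g
    rcases Nat.eq_zero_or_pos c with hc0 | hcpos
    · -- abelian case
      subst hc0
      have hab : ∀ a b : G, Commute a b := by
        intro a b
        have : ⁅a, b⁆ ∈ (⊤ : Subgroup G).lowerCentralSeries 1 :=
          Subgroup.commutator_mem_commutator (Subgroup.mem_top a) (Subgroup.mem_top b)
        rw [hG, Subgroup.mem_bot] at this
        exact commutatorElement_eq_one_iff_commute.mp this
      have hg : g ∈ Subgroup.closure {x : G | IsOfFinOrder x} := by
        rw [hcl]; exact Subgroup.mem_top g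
      induction hg using Subgroup.closure_induction with
      | mem x hx => exact hx
      | one => exact IsOfFinOrder.one
      | mul x y _ _ hx hy => exact (hab x y).isOfFinOrder_mul hx hy
      | inv x _ hx => exact hx.inv
    · -- c ≥ 1
      set Z := (⊤ : Subgroup G).lowerCentralSeries c with hZdef
      have hZcent : ∀ z ∈ Z, ∀ w : G, Commute z w := by
        intro z hz w
        have : ⁅z, w⁆ ∈ (⊤ : Subgroup G).lowerCentralSeries (c + 1) :=
          Subgroup.commutator_mem_commutator hz (Subgroup.mem_top w)
        rw [hG, Subgroup.mem_bot] at this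
        exact commutatorElement_eq_one_iff_commute.mp this
      have h1 : (⊤ : Subgroup (G ⧸ Z)).lowerCentralSeries c = ⊥ := lcs_quot_bot le_rfl
      have h2 : Subgroup.closure {x : G ⧸ Z | IsOfFinOrder x} = ⊤ := by
        rw [eq_top_iff, ← Subgroup.map_top_of_surjective _ (QuotientGroup.mk'_surjective Z)]
        refine le_trans (le_of_eq (congrArg (Subgroup.map (QuotientGroup.mk' Z)) hcl.symm)) ?_
        rw [MonoidHom.map_closure]
        apply Subgroup.closure_mono
        rintro _ ⟨x, hx, rfl⟩
        exact (QuotientGroup.mk' Z).isOfFinOrder hx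
      have hQtors : ∀ q : G ⧸ Z, IsOfFinOrder q := ih h1 h2
      have hpow : ∀ w : G, ∃ t : ℕ, 0 < t ∧ w ^ t ∈ Z := by
        intro w
        obtain ⟨t, ht, ht1⟩ := isOfFinOrder_iff_pow_eq_one.mp (hQtors (w : G ⧸ Z))
        refine ⟨t, ht, ?_⟩
        rwa [← QuotientGroup.eq_one_iff, QuotientGroup.mk_pow]
      -- bilinearity: for u ∈ γ_{c-1}, ⁅u^t, w⁆ = ⁅u, w⁆ ^ t
      obtain ⟨c', rfl⟩ : ∃ c', c = c' + 1 := ⟨c - 1, by omega⟩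
      have hbil : ∀ u ∈ (⊤ : Subgroup G).lowerCentralSeries c', ∀ (w : G) (t : ℕ),
          ⁅u ^ t, w⁆ = ⁅u, w⁆ ^ t := by
        intro u hu w t
        induction t with
        | zero => simp
        | succ t iht =>
          have hmem : ⁅u ^ t, w⁆ ∈ Z :=
            Subgroup.commutator_mem_commutator (pow_mem hu t) (Subgroup.mem_top w)
          have hconj : u * ⁅u ^ t, w⁆ * u⁻¹ = ⁅u ^ t, w⁆ := by
            have h := (hZcent _ hmem u).eq
            rw [← h]
            group
          rw [pow_succ', comm_mul_left, hconj, iht]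
          exact (pow_succ _ _).symm
      -- Z is generated by torsion central elements, hence torsion
      have hZeq : Z = Subgroup.closure
          {x : G | ∃ p ∈ (⊤ : Subgroup G).lowerCentralSeries c', ∃ q ∈ (⊤ : Subgroup G), ⁅p, q⁆ = x} := by
        rw [← Subgroup.commutator_def]; rfl
      have hZtors : ∀ z ∈ Subgroup.closure
          {x : G | ∃ p ∈ (⊤ : Subgroup G).lowerCentralSeries c', ∃ q ∈ (⊤ : Subgroup G), ⁅p, q⁆ = x},
          IsOfFinOrder z := by
        intro z hz
        induction hz using Subgroup.closure_induction with
        | mem x hx =>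
          obtain ⟨p, hp, q, -, rfl⟩ := hx
          obtain ⟨t, ht, htZ⟩ := hpow p
          have : ⁅p, q⁆ ^ t = 1 := by
            rw [← hbil p hp q t]
            exact commutatorElement_eq_one_iff_commute.mpr (hZcent _ htZ q)
          exact isOfFinOrder_iff_pow_eq_one.mpr ⟨t, ht, this⟩
        | one => exact IsOfFinOrder.one
        | mul x y hx hy hx' hy' =>
          have hxZ : x ∈ Z := by rw [hZeq]; exact hx
          exact (hZcent x hxZ y).isOfFinOrder_mul hx' hy'
        | inv x hx hx' => exact hx'.inv
      obtain ⟨t, ht, htZ⟩ := hpow g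
      refine isOfFinOrder_of_pow ht (hZtors _ ?_)
      rw [← hZeq]; exact htZ

/-- The subgroup generated by all torsion elements. -/
def torsionClosure (G : Type u) [Group G] : Subgroup G :=
  Subgroup.closure {x : G | IsOfFinOrder x}

instance torsionClosure_normal : (torsionClosure G).Normal := by
  constructor
  intro n hn g
  have : ∀ (x : G), x ∈ torsionClosure G → g * x * g⁻¹ ∈ torsionClosure G := by
    intro x hx
    induction hx using Subgroup.closure_induction with
    | mem y hy =>
      apply Subgroup.subset_closure
      have : g * y * g⁻¹ = (MulAut.conj g) y := rfl
      rw [this]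
      exact (MulAut.conj g).toMonoidHom.isOfFinOrder hy
    | one => simp [Subgroup.one_mem]
    | mul a b _ _ ha hb =>
      have : g * (a * b) * g⁻¹ = (g * a * g⁻¹) * (g * b * g⁻¹) := by group
      rw [this]; exact mul_mem ha hb
    | inv a _ ha =>
      have : g * a⁻¹ * g⁻¹ = (g * a * g⁻¹)⁻¹ := by group
      rw [this]; exact inv_mem ha
  exact this n hn

/-- In a group with trivial `c`-th lower central series entry, every element of the
torsion closure is torsion. -/
lemma torsionClosure_isTorsion (c : ℕ) (hG : (⊤ : Subgroup G).lowerCentralSeries c = ⊥) :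
    ∀ g ∈ torsionClosure G, IsOfFinOrder g := by
  intro g hg
  set H := torsionClosure G
  -- H as a group satisfies the hypotheses of gen_torsion
  have hHlcs : (⊤ : Subgroup H).lowerCentralSeries c = ⊥ := by
    rw [eq_bot_iff]
    intro x hx
    have : H.subtype x ∈ (⊤ : Subgroup G).lowerCentralSeries c :=
      Subgroup.lowerCentralSeries_map_subtype_le H c ⟨x, hx, rfl⟩
    rw [hG, Subgroup.mem_bot] at this
    rw [Subgroup.mem_bot]
    exact Subtype.ext this
  have hHcl : Subgroup.closure {x : H | IsOfFinOrder x} = ⊤ := by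
    rw [eq_top_iff]
    rintro ⟨x, hx⟩ -
    induction hx using Subgroup.closure_induction with
    | mem y hy =>
      apply Subgroup.subset_closure
      obtain ⟨t, ht, ht1⟩ := isOfFinOrder_iff_pow_eq_one.mp hy
      refine isOfFinOrder_iff_pow_eq_one.mpr ⟨t, ht, ?_⟩
      ext
      simpa using ht1
    | one => exact Subgroup.one_mem _
    | mul a b ha hb ha' hb' => exact mul_mem ha' hb'
    | inv a ha ha' => exact inv_mem ha'
  have := gen_torsion c hHlcs hHcl ⟨g, hg⟩
  obtain ⟨t, ht, ht1⟩ := isOfFinOrder_iff_pow_eq_one.mp this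
  refine isOfFinOrder_iff_pow_eq_one.mpr ⟨t, ht, ?_⟩
  have := congrArg (H.subtype) ht1
  simpa using this

lemma quot_torsionClosure_torsionFree (c : ℕ) (hG : (⊤ : Subgroup G).lowerCentralSeries c = ⊥)
    (q : G ⧸ torsionClosure G) (hq : IsOfFinOrder q) : q = 1 := by
  obtain ⟨g, rfl⟩ := QuotientGroup.mk'_surjective (torsionClosure G) q
  obtain ⟨t, ht, ht1⟩ := isOfFinOrder_iff_pow_eq_one.mp hq
  have : g ^ t ∈ torsionClosure G := by
    rwa [← QuotientGroup.eq_one_iff, QuotientGroup.mk_pow]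
  have : IsOfFinOrder g :=
    isOfFinOrder_of_pow ht (torsionClosure_isTorsion c hG _ this)
  exact QuotientGroup.eq_one_iff g |>.mpr (Subgroup.subset_closure this)

/-- Key lemma (Mal'cev-style): in a group with `γ_c = ⊥`, if `u ∈ γ_r` and `u^m` commutes
with `v`, then `⁅u,v⁆` is torsion. Induction on `μ ≥ c - r`. -/
lemma M2 : ∀ (μ c r : ℕ), c ≤ r + μ → ∀ {G : Type u} [Group G] (u v : G) (m : ℕ), 0 < m →
    (⊤ : Subgroup G).lowerCentralSeries c = ⊥ → u ∈ (⊤ : Subgroup G).lowerCentralSeries r → ⁅u ^ m, v⁆ = 1 →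
    ∃ s : ℕ, 0 < s ∧ ⁅u, v⁆ ^ s = 1 := by
  intro μ
  induction μ with
  | zero =>
    intro c r hcr G _ u v m _ hG hu _
    have : u ∈ (⊤ : Subgroup G).lowerCentralSeries c := Subgroup.lowerCentralSeries_antitone _ (by omega) hu
    rw [hG, Subgroup.mem_bot] at this
    exact ⟨1, one_pos, by simp [this, commutatorElement_def]⟩
  | succ μ ih =>
    intro c r hcr G _ u v m hm hG hu h
    by_cases hle : c ≤ r + μ
    · exact ih c r hle u v m hm hG hu h
    · obtain ⟨c', rfl⟩ : ∃ c', c = c' + 1 := ⟨c - 1, by omega⟩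
      have hc'r : c' ≤ r + μ := by omega
      -- pass to the torsion-free quotient
      set T := torsionClosure G with hTdef
      haveI : T.Normal := torsionClosure_normal
      set π := QuotientGroup.mk' T with hπdef
      have htf : ∀ q : G ⧸ T, IsOfFinOrder q → q = 1 :=
        quot_torsionClosure_torsionFree (c' + 1) hG
      have hQc : (⊤ : Subgroup (G ⧸ T)).lowerCentralSeries (c' + 1) = ⊥ :=
        lcs_quot_bot (hG ▸ bot_le)
      suffices hQ : ⁅π u, π v⁆ = 1 by
        have hmemT : ⁅u, v⁆ ∈ T := by
          rw [← QuotientGroup.ker_mk' T, MonoidHom.mem_ker, ← hπdef,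
            map_commutatorElement]
          exact hQ
        obtain ⟨s, hs, hs1⟩ := isOfFinOrder_iff_pow_eq_one.mp
          (torsionClosure_isTorsion (c' + 1) hG _ hmemT)
        exact ⟨s, hs, hs1⟩
      -- now work in Q := G ⧸ T
      have hQu : π u ∈ (⊤ : Subgroup (G ⧸ T)).lowerCentralSeries r := mem_lcs_quot hu
      have hQh : ⁅π u ^ m, π v⁆ = 1 := by
        have := congrArg π h
        rw [map_commutatorElement, map_pow, map_one] at this
        exact this
      set Z := (⊤ : Subgroup (G ⧸ T)).lowerCentralSeries c' with hZdef
      have hZcent : ∀ z ∈ Z, ∀ w : G ⧸ T, Commute z w := by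
        intro z hz w
        have : ⁅z, w⁆ ∈ (⊤ : Subgroup (G ⧸ T)).lowerCentralSeries (c' + 1) :=
          Subgroup.commutator_mem_commutator hz (Subgroup.mem_top w)
        rw [hQc, Subgroup.mem_bot] at this
        exact commutatorElement_eq_one_iff_commute.mp this
      set ρ := QuotientGroup.mk' Z with hρdef
      have hRc : (⊤ : Subgroup ((G ⧸ T) ⧸ Z)).lowerCentralSeries c' = ⊥ := lcs_quot_bot le_rfl
      obtain ⟨K, hK, hK1⟩ := ih c' r hc'r (ρ (π u)) (ρ (π v)) m hm hRc
        (mem_lcs_quot hQu)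
        (by rw [← map_pow, ← map_commutatorElement, hQh, map_one])
      set e := ⁅π u, π v⁆ with hedef
      have hd : e ^ K ∈ Z := by
        rw [← QuotientGroup.ker_mk' Z, MonoidHom.mem_ker, ← hρdef, map_pow,
          hedef, map_commutatorElement]
        exact hK1
      set d := e ^ K with hddef
      have hdc : ∀ w : G ⧸ T, Commute d w := hZcent d hd
      set f : ℕ → G ⧸ T := fun k => π u ^ k * e * (π u ^ k)⁻¹ with hfdef
      have hfK : ∀ k, f k ^ K = d := by
        intro k
        show (π u ^ k * e * (π u ^ k)⁻¹) ^ K = d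
        rw [conj_pow, ← hddef]
        have := (hdc (π u ^ k)).eq
        rw [← this]
        group
      have hfmem : ∀ k, f k ∈ (⊤ : Subgroup (G ⧸ T)).lowerCentralSeries (r + 1) := by
        intro k
        have he : e ∈ (⊤ : Subgroup (G ⧸ T)).lowerCentralSeries (r + 1) :=
          Subgroup.commutator_mem_commutator hQu (Subgroup.mem_top (π v))
        exact (lowerCentralSeries_normal _ (r + 1)).conj_mem e he (π u ^ k)
      have hcomm : ∀ j k, Commute (f j) (f k) := by
        intro j k
        have h1 : ⁅f j ^ K, f k⁆ = 1 := by
          rw [hfK]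
          exact commutatorElement_eq_one_iff_commute.mpr (hdc (f k))
        obtain ⟨S, hS, hS1⟩ := ih (c' + 1) (r + 1) (by omega) (f j) (f k) K hK hQc
          (hfmem j) h1
        have := htf _ (isOfFinOrder_iff_pow_eq_one.mpr ⟨S, hS, hS1⟩)
        exact commutatorElement_eq_one_iff_commute.mp this
      have key : ∀ k : ℕ, (∀ j, Commute (f j) ⁅π u ^ k, π v⁆) ∧ ⁅π u ^ k, π v⁆ ^ K = d ^ k := by
        intro k
        induction k with
        | zero =>
          constructor
          · intro j
            have : ⁅π u ^ 0, π v⁆ = 1 := by simp [commutatorElement_def]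
            rw [this]; exact Commute.one_right _
          · simp [commutatorElement_def]
        | succ k ihk =>
          have hid : ⁅π u ^ (k + 1), π v⁆ = f k * ⁅π u ^ k, π v⁆ := by
            rw [pow_succ, comm_mul_left]
          constructor
          · intro j
            rw [hid]
            exact (hcomm j k).mul_right (ihk.1 j)
          · rw [hid, (ihk.1 k).mul_pow, hfK, ihk.2, ← pow_succ']
      have hd1 : d = 1 := by
        have h1 := (key m).2
        rw [hQh, one_pow] at h1
        exact htf d (isOfFinOrder_iff_pow_eq_one.mpr ⟨m, hm, h1.symm⟩)
      have he1 : e = 1 :=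
        htf e (isOfFinOrder_iff_pow_eq_one.mpr ⟨K, hK, by rw [← hddef, hd1]⟩)
      exact he1

/-- Core lemma: in a group with `γ_c = ⊥`, commuting powers force torsion commutator. -/
lemma core_lemma (c : ℕ) {G : Type u} [Group G] (hG : (⊤ : Subgroup G).lowerCentralSeries c = ⊥)
    (x y : G) (n m : ℕ) (hn : 0 < n) (hm : 0 < m) (h : ⁅x ^ n, y ^ m⁆ = 1) :
    ∃ s : ℕ, 0 < s ∧ ⁅x, y⁆ ^ s = 1 := by
  -- Step 1: ⁅x, y^m⁆ is torsion
  obtain ⟨s₁, hs₁, hs₁1⟩ := M2 c c 0 (by omega) x (y ^ m) n hn hG (Subgroup.mem_top x) h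
  -- Step 2: pass to G ⧸ torsionClosure
  set T := torsionClosure G with hTdef
  haveI : T.Normal := torsionClosure_normal
  set π := QuotientGroup.mk' T with hπdef
  have htf : ∀ q : G ⧸ T, IsOfFinOrder q → q = 1 :=
    quot_torsionClosure_torsionFree c hG
  have hQc : (⊤ : Subgroup (G ⧸ T)).lowerCentralSeries c = ⊥ := lcs_quot_bot (hG ▸ bot_le)
  have hmem : ⁅x, y ^ m⁆ ∈ T :=
    Subgroup.subset_closure (isOfFinOrder_iff_pow_eq_one.mpr ⟨s₁, hs₁, hs₁1⟩)
  have hQ1 : ⁅π x, π y ^ m⁆ = 1 := by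
    have : π ⁅x, y ^ m⁆ = 1 := by
      rw [← MonoidHom.mem_ker, QuotientGroup.ker_mk']
      exact hmem
    rwa [map_commutatorElement, map_pow] at this
  have hQ2 : ⁅π y ^ m, π x⁆ = 1 := by
    rw [← commutatorElement_inv, hQ1, inv_one]
  obtain ⟨s₂, hs₂, hs₂1⟩ := M2 c c 0 (by omega) (π y) (π x) m hm hQc
    (Subgroup.mem_top _) hQ2
  -- pull back
  have : ⁅y, x⁆ ^ s₂ ∈ T := by
    rw [← QuotientGroup.ker_mk' T, MonoidHom.mem_ker, ← hπdef, map_pow,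
      map_commutatorElement]
    exact hs₂1
  obtain ⟨s₃, hs₃, hs₃1⟩ := isOfFinOrder_iff_pow_eq_one.mp
    (torsionClosure_isTorsion c hG _ this)
  refine ⟨s₂ * s₃, by positivity, ?_⟩
  have : ⁅x, y⁆ = ⁅y, x⁆⁻¹ := by rw [commutatorElement_inv]
  rw [this, inv_pow, pow_mul, hs₃1, inv_one]

/-- If `x ∈ 𝐺̄_i` and `y ∈ 𝐺̄_j` then `[x,y] = x⁻¹y⁻¹xy ∈ 𝐺̄_{i+j}`, where
`𝐺̄_i = {c ∈ G : ∃ n ≥ 1, cⁿ ∈ G_i}` and `G_i = (⊤ : Subgroup G).lowerCentralSeries (i-1)` in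
Mathlib's indexing. -/
theorem genCommutator_comm_mem {G : Type*} [Group G] (i j : ℕ) (hi : 1 ≤ i) (hj : 1 ≤ j)
    (x y : G)
    (hx : ∃ n : ℕ, 1 ≤ n ∧ x ^ n ∈ (⊤ : Subgroup G).lowerCentralSeries (i - 1))
    (hy : ∃ n : ℕ, 1 ≤ n ∧ y ^ n ∈ (⊤ : Subgroup G).lowerCentralSeries (j - 1)) :
    ∃ n : ℕ, 1 ≤ n ∧ (x⁻¹ * y⁻¹ * x * y) ^ n ∈ (⊤ : Subgroup G).lowerCentralSeries (i + j - 1) := by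
  obtain ⟨n, hn, hxn⟩ := hx
  obtain ⟨m, hm, hym⟩ := hy
  set a := i - 1
  set b := j - 1
  have hab : i + j - 1 = a + b + 1 := by omega
  rw [hab]
  set N := (⊤ : Subgroup G).lowerCentralSeries (a + b + 1) with hNdef
  set π := QuotientGroup.mk' N with hπdef
  have hQbot : (⊤ : Subgroup (G ⧸ N)).lowerCentralSeries (a + b + 1) = ⊥ := lcs_quot_bot le_rfl
  -- the images of the powers of x⁻¹ and y⁻¹ commute
  have hxinv : (x⁻¹) ^ n ∈ (⊤ : Subgroup G).lowerCentralSeries a := by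
    rw [inv_pow]; exact inv_mem hxn
  have hyinv : (y⁻¹) ^ m ∈ (⊤ : Subgroup G).lowerCentralSeries b := by
    rw [inv_pow]; exact inv_mem hym
  have hcomm : ⁅π x⁻¹ ^ n, π y⁻¹ ^ m⁆ = 1 := by
    have h1 : π x⁻¹ ^ n ∈ (⊤ : Subgroup (G ⧸ N)).lowerCentralSeries a := by
      rw [← map_pow]; exact mem_lcs_quot hxinv
    have h2 : π y⁻¹ ^ m ∈ (⊤ : Subgroup (G ⧸ N)).lowerCentralSeries b := by
      rw [← map_pow]; exact mem_lcs_quot hyinv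
    have : ⁅π x⁻¹ ^ n, π y⁻¹ ^ m⁆ ∈ (⊤ : Subgroup (G ⧸ N)).lowerCentralSeries (a + b + 1) :=
      lcs_comm_le a b (Subgroup.commutator_mem_commutator h1 h2)
    rwa [hQbot, Subgroup.mem_bot] at this
  obtain ⟨s, hs, hs1⟩ := core_lemma (a + b + 1) hQbot (π x⁻¹) (π y⁻¹) n m
    (by omega) (by omega) hcomm
  refine ⟨s, hs, ?_⟩
  have hrw : x⁻¹ * y⁻¹ * x * y = ⁅x⁻¹, y⁻¹⁆ := by
    rw [commutatorElement_def]; group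
  rw [hrw, ← QuotientGroup.ker_mk' N, MonoidHom.mem_ker, ← hπdef, map_pow,
    map_commutatorElement]
  exact hs1
end

section
/- Let N be a finitely generated nilpotent group and H a finite-index subgroup of N. Then for every j ≥ 1, the j-th lower central series subgroup H_j has finite index in N_j. -/
open Subgroup
open scoped commutatorElement

namespace Port

/-- Compatibility shim: the lower central series of the group `G`. -/
def lowerCentralSeries (G : Type*) [Group G] (n : ℕ) : Subgroup G :=
  (⊤ : Subgroup G).lowerCentralSeries n

theorem lowerCentralSeries_zero {G : Type*} [Group G] : lowerCentralSeries G 0 = ⊤ := rfl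

instance lowerCentralSeries_normal {G : Type*} [Group G] (n : ℕ) :
    (lowerCentralSeries G n).Normal := by
  unfold lowerCentralSeries; infer_instance

theorem lowerCentralSeries_antitone {G : Type*} [Group G] :
    Antitone (lowerCentralSeries G) :=
  Subgroup.lowerCentralSeries_antitone ⊤

theorem nilpotent_iff_lowerCentralSeries {G : Type*} [Group G] :
    Group.IsNilpotent G ↔ ∃ n, lowerCentralSeries G n = ⊥ :=
  Subgroup.nilpotent_iff_lowerCentralSeries

section Aux

variable {N : Type*} [Group N]

/-- The "internal" lower central series of a subgroup `K`, as subgroups of the ambient group. -/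
private lemma lcs_succ' (n : ℕ) :
    lowerCentralSeries N (n + 1) = ⁅lowerCentralSeries N n, ⊤⁆ := rfl

private def lcsIn (K : Subgroup N) : ℕ → Subgroup N
  | 0 => K
  | n + 1 => ⁅lcsIn K n, K⁆

private lemma lcsIn_map (H : Subgroup N) :
    ∀ n, (lowerCentralSeries H n).map H.subtype = lcsIn H n
  | 0 => by
    rw [lowerCentralSeries_zero, ← MonoidHom.range_eq_map, Subgroup.range_subtype]; rfl
  | n + 1 => by
    rw [lcs_succ', Subgroup.map_commutator, lcsIn_map H n,
      ← MonoidHom.range_eq_map, Subgroup.range_subtype]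
    rfl

private lemma lcsIn_normal {K : Subgroup N} (hK : K.Normal) : ∀ n, (lcsIn K n).Normal
  | 0 => hK
  | n + 1 => by
    haveI := lcsIn_normal hK n
    haveI := hK
    exact Subgroup.commutator_normal _ _

private lemma lcsIn_le_lcs (K : Subgroup N) :
    ∀ n, lcsIn K n ≤ lowerCentralSeries N n
  | 0 => le_top
  | n + 1 => by
    rw [lcs_succ']
    exact Subgroup.commutator_mono (lcsIn_le_lcs K n) le_top

private lemma lcsIn_mono {K H : Subgroup N} (h : K ≤ H) :
    ∀ n, lcsIn K n ≤ lcsIn H n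
  | 0 => h
  | n + 1 => Subgroup.commutator_mono (lcsIn_mono h n) h

private lemma lcsIn_succ_le {K : Subgroup N} (hK : K.Normal) (n : ℕ) :
    lcsIn K (n + 1) ≤ lcsIn K n := by
  haveI := lcsIn_normal hK n
  refine Subgroup.commutator_le.mpr fun a ha b hb => ?_
  have h1 : a⁻¹ ∈ lcsIn K n := inv_mem ha
  have h2 : b * a⁻¹ * b⁻¹ ∈ lcsIn K n := (lcsIn_normal hK n).conj_mem _ h1 b
  have : ⁅a, b⁆ = a * (b * a⁻¹ * b⁻¹) := by group
  rw [this]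
  exact mul_mem ha h2

private lemma lcsIn_le_of_le {K : Subgroup N} (hK : K.Normal) {i n : ℕ} (h : i ≤ n) :
    lcsIn K n ≤ lcsIn K i := by
  induction n with
  | zero => simp_all
  | succ n ih =>
    rcases Nat.lt_or_ge i (n + 1) with h' | h'
    · exact (lcsIn_succ_le hK n).trans (ih (Nat.lt_succ_iff.mp h'))
    · have : i = n + 1 := le_antisymm h h'
      subst this; exact le_rfl

/-- Weight-`n` iterated commutators of elements of `S` (Mathlib indexing: weight `n+1`). -/
private def wSet (S : Set N) : ℕ → Set N
  | 0 => S
  | n + 1 => (fun p : N × N => ⁅p.1, p.2⁆) '' ((wSet S n) ×ˢ S)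

private lemma wSet_finite {S : Set N} (hS : S.Finite) : ∀ n, (wSet S n).Finite
  | 0 => hS
  | n + 1 => ((wSet_finite hS n).prod hS).image _

private lemma wSet_subset (S : Set N) :
    ∀ n, wSet S n ⊆ (lowerCentralSeries N n : Set N)
  | 0 => fun x _ => by simp [lowerCentralSeries_zero]
  | n + 1 => by
    rintro x ⟨⟨w, s⟩, ⟨hw, _⟩, rfl⟩
    rw [SetLike.mem_coe, lcs_succ']
    exact Subgroup.commutator_mem_commutator (wSet_subset S n hw) (mem_top s)

private lemma conj_central {Q : Type*} [Group Q] {c : Q} (hc : c ∈ Subgroup.center Q)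
    (a : Q) : a * c * a⁻¹ = c := by
  rw [Subgroup.mem_center_iff.mp hc a, mul_inv_cancel_right]

/-- bilinearity of commutators with central values. -/
private lemma commPow {Q : Type*} [Group Q] (M : Subgroup Q)
    (hM : ∀ x ∈ M, ∀ y : Q, ⁅x, y⁆ ∈ Subgroup.center Q) {u : Q} (hu : u ∈ M) (v : Q)
    (a b : ℕ) : ⁅u ^ a, v ^ b⁆ = ⁅u, v⁆ ^ (a * b) := by
  have h1 : ∀ w, w ∈ M → ∀ b : ℕ, ⁅w, v ^ b⁆ = ⁅w, v⁆ ^ b := by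
    intro w hw b
    induction b with
    | zero => simp
    | succ b ih =>
      have key : ⁅w, v ^ b * v⁆ = ⁅w, v ^ b⁆ * (v ^ b * ⁅w, v⁆ * (v ^ b)⁻¹) := by group
      rw [pow_succ, key, conj_central (hM w hw v) (v ^ b), ih, ← pow_succ]
  have h2 : ∀ a : ℕ, ⁅u ^ a, v⁆ = ⁅u, v⁆ ^ a := by
    intro a
    induction a with
    | zero => simp
    | succ a ih =>
      have key : ⁅u ^ a * u, v⁆ = (u ^ a * ⁅u, v⁆ * (u ^ a)⁻¹) * ⁅u ^ a, v⁆ := by group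
      rw [pow_succ, key, conj_central (hM u hu v) (u ^ a), ih, ← pow_succ']
  rw [h1 _ (pow_mem hu a) b, h2 a, ← pow_mul]

private lemma map_lcs_le_center (T : Subgroup N) [T.Normal] (i : ℕ)
    (hT : lowerCentralSeries N (i + 1) ≤ T) :
    (lowerCentralSeries N i).map (QuotientGroup.mk' T) ≤ Subgroup.center (N ⧸ T) := by
  rw [← Subgroup.centralizer_univ, ← Subgroup.coe_top]
  refine Subgroup.commutator_eq_bot_iff_le_centralizer.mp ?_
  have htop : (⊤ : Subgroup (N ⧸ T)) = Subgroup.map (QuotientGroup.mk' T) ⊤ := by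
    rw [← MonoidHom.range_eq_map]
    exact (MonoidHom.range_eq_top.mpr (QuotientGroup.mk'_surjective T)).symm
  rw [htop, ← Subgroup.map_commutator, ← lcs_succ', Subgroup.map_eq_bot_iff,
    QuotientGroup.ker_mk']
  exact hT

private lemma map_top_pi (T : Subgroup N) [T.Normal] :
    (⊤ : Subgroup (N ⧸ T)) = Subgroup.map (QuotientGroup.mk' T) ⊤ := by
  rw [← MonoidHom.range_eq_map]
  exact (MonoidHom.range_eq_top.mpr (QuotientGroup.mk'_surjective T)).symm

/-- Key power lemma: if `gᵐ ∈ K` for all `g`, then `m^(i+1)`-th powers of elements of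
`γ_i(N)` lie in `K_i ⊔ γ_{i+1}(N)`. -/
private lemma pow_mem_lcsIn_sup {K : Subgroup N} (hK : K.Normal) (m : ℕ)
    (hm : ∀ g : N, g ^ m ∈ K) :
    ∀ i, ∀ x ∈ lowerCentralSeries N i,
      x ^ m ^ (i + 1) ∈ lcsIn K i ⊔ lowerCentralSeries N (i + 1) := by
  intro i
  induction i with
  | zero =>
    intro x _
    have : x ^ m ^ 1 = x ^ m := by rw [pow_one]
    rw [this]
    exact Subgroup.mem_sup_left (hm x)
  | succ i ih =>
    intro x hx
    haveI hKN := hK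
    haveI := lcsIn_normal hK (i + 1)
    set T : Subgroup N := lcsIn K (i + 1) ⊔ lowerCentralSeries N (i + 2) with hTdef
    haveI : T.Normal := Subgroup.sup_normal _ _
    set π : N →* N ⧸ T := QuotientGroup.mk' T with hπdef
    have hTγ : lowerCentralSeries N (i + 2) ≤ T := le_sup_right
    have hcent : (lowerCentralSeries N (i + 1)).map π ≤ Subgroup.center (N ⧸ T) :=
      map_lcs_le_center T (i + 1) hTγ
    have hMtop : (lowerCentralSeries N (i + 1)).map π
        = ⁅(lowerCentralSeries N i).map π, ⊤⁆ := by
      rw [lcs_succ', Subgroup.map_commutator, ← map_top_pi]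
    set M : Subgroup (N ⧸ T) := (lowerCentralSeries N i).map π with hMdef
    have hM : ∀ p ∈ M, ∀ w : N ⧸ T, ⁅p, w⁆ ∈ Subgroup.center (N ⧸ T) := by
      intro p hp w
      have h1 : ⁅p, w⁆ ∈ ⁅M, (⊤ : Subgroup (N ⧸ T))⁆ :=
        Subgroup.commutator_mem_commutator hp (mem_top w)
      rw [← hMtop] at h1
      exact hcent h1
    suffices hq : ∀ q ∈ (lowerCentralSeries N (i + 1)).map π, q ^ m ^ (i + 2) = 1 by
      have h1 := hq (π x) (Subgroup.mem_map_of_mem π hx)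
      rw [← map_pow] at h1
      have : x ^ m ^ (i + 2) ∈ T := by
        rwa [← QuotientGroup.ker_mk' T, MonoidHom.mem_ker]
      exact this
    intro q hq
    rw [hMtop, Subgroup.commutator_def] at hq
    induction hq using Subgroup.closure_induction with
    | mem g hg =>
      obtain ⟨p, hp, w, -, rfl⟩ := hg
      obtain ⟨y, hy, rfl⟩ := hp
      obtain ⟨g₀, rfl⟩ := QuotientGroup.mk'_surjective T w
      have hu : π y ∈ M := Subgroup.mem_map_of_mem π hy
      have key : ⁅(π y) ^ m ^ (i + 1), (π g₀) ^ m⁆ = ⁅π y, π g₀⁆ ^ (m ^ (i + 1) * m) :=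
        commPow M hM hu (π g₀) _ m
      have hu' : (π y) ^ m ^ (i + 1)
          ∈ (lcsIn K i ⊔ lowerCentralSeries N (i + 1)).map π := by
        rw [← map_pow]
        exact Subgroup.mem_map_of_mem π (ih y hy)
      have hv' : (π g₀) ^ m ∈ K.map π := by
        rw [← map_pow]
        exact Subgroup.mem_map_of_mem π (hm g₀)
      have hcentralize : (lcsIn K i ⊔ lowerCentralSeries N (i + 1)).map π
          ≤ Subgroup.centralizer ((K.map π : Subgroup (N ⧸ T)) : Set (N ⧸ T)) := by
        rw [Subgroup.map_sup]
        apply sup_le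
        · apply Subgroup.commutator_eq_bot_iff_le_centralizer.mp
          rw [← Subgroup.map_commutator]
          have h2 : ⁅lcsIn K i, K⁆ = lcsIn K (i + 1) := rfl
          rw [h2, Subgroup.map_eq_bot_iff, QuotientGroup.ker_mk']
          exact le_sup_left
        · refine hcent.trans ?_
          rw [← Subgroup.centralizer_univ]
          exact Subgroup.centralizer_le (Set.subset_univ _)
      have hone : ⁅(π y) ^ m ^ (i + 1), (π g₀) ^ m⁆ = 1 := by
        refine commutatorElement_eq_one_iff_commute.mpr ?_
        have := Subgroup.mem_centralizer_iff.mp (hcentralize hu') _ hv'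
        exact this.symm
      have : m ^ (i + 2) = m ^ (i + 1) * m := pow_succ m (i + 1)
      rw [this, ← key, hone]
    | one => exact one_pow _
    | mul a b ha hb pa pb =>
      have ha' : a ∈ Subgroup.center (N ⧸ T) := by
        rw [← Subgroup.commutator_def, ← hMtop] at ha
        exact hcent ha
      have hab : Commute a b := (Subgroup.mem_center_iff.mp ha' b).symm
      rw [hab.mul_pow, pa, pb, one_mul]
    | inv a ha pa => rw [inv_pow, pa, inv_one]

/-- Generation: `γ_n(N)` is generated by weight-`n` commutators of generators together with
`γ_{n+1}(N)`. -/
private lemma lcs_eq_closure_sup (S : Set N) (hS : Subgroup.closure S = ⊤) :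
    ∀ n, lowerCentralSeries N n
      = Subgroup.closure (wSet S n) ⊔ lowerCentralSeries N (n + 1) := by
  intro n
  induction n with
  | zero =>
    have h1 : Subgroup.closure (wSet S 0) = ⊤ := hS
    rw [lowerCentralSeries_zero, h1, top_sup_eq]
  | succ n ih =>
    refine le_antisymm ?_ (sup_le ((Subgroup.closure_le _).mpr (wSet_subset S (n + 1)))
      (lowerCentralSeries_antitone (Nat.le_succ _)))
    set T : Subgroup N := lowerCentralSeries N (n + 2) with hTdef
    set π : N →* N ⧸ T := QuotientGroup.mk' T with hπdef
    have hcent : (lowerCentralSeries N (n + 1)).map π ≤ Subgroup.center (N ⧸ T) :=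
      map_lcs_le_center T (n + 1) le_rfl
    set D : Subgroup (N ⧸ T) := (Subgroup.closure (wSet S (n + 1))).map π with hDdef
    have hMgen : (lowerCentralSeries N n).map π
        = Subgroup.closure (π '' wSet S n) ⊔ (lowerCentralSeries N (n + 1)).map π := by
      rw [ih, Subgroup.map_sup, MonoidHom.map_closure]
    have hMtop : (lowerCentralSeries N (n + 1)).map π
        = ⁅(lowerCentralSeries N n).map π, ⊤⁆ := by
      rw [lcs_succ', Subgroup.map_commutator, ← map_top_pi]
    have hMc : ∀ x ∈ (lowerCentralSeries N n).map π, ∀ w : N ⧸ T,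
        ⁅x, w⁆ ∈ Subgroup.center (N ⧸ T) := by
      intro x hx w
      refine hcent ?_
      rw [hMtop]
      exact Subgroup.commutator_mem_commutator hx (mem_top w)
    have hmaple : (lowerCentralSeries N (n + 1)).map π ≤ D := by
      rw [hMtop]
      refine Subgroup.commutator_le.mpr ?_
      intro p hp w hw
      clear hw
      revert w
      have hp' : p ∈ Subgroup.closure
          ((π '' wSet S n) ∪ ((lowerCentralSeries N (n + 1)).map π : Set (N ⧸ T))) := by
        rw [Subgroup.closure_union, Subgroup.closure_eq, ← hMgen]
        exact hp
      have hback : ∀ x, x ∈ Subgroup.closure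
          ((π '' wSet S n) ∪ ((lowerCentralSeries N (n + 1)).map π : Set (N ⧸ T)))
          → x ∈ (lowerCentralSeries N n).map π := by
        intro x hx
        rwa [Subgroup.closure_union, Subgroup.closure_eq, ← hMgen] at hx
      clear hp
      induction hp' using Subgroup.closure_induction with
      | mem g hg =>
        cases hg with
        | inl h =>
          obtain ⟨w₀, hw₀, rfl⟩ := h
          have hπw₀ : π w₀ ∈ (lowerCentralSeries N n).map π :=
            Subgroup.mem_map_of_mem π (wSet_subset S n hw₀)
          intro w
          have hw : w ∈ Subgroup.closure (π '' S) := by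
            have : Subgroup.closure (π '' S) = ⊤ := by
              rw [← MonoidHom.map_closure, hS, ← map_top_pi]
            rw [this]
            exact mem_top w
          induction hw using Subgroup.closure_induction with
          | mem s hs =>
            obtain ⟨s₀, hs₀, rfl⟩ := hs
            have h3 : ⁅π w₀, π s₀⁆ = π ⁅w₀, s₀⁆ := (map_commutatorElement π w₀ s₀).symm
            rw [h3]
            refine Subgroup.mem_map_of_mem π (Subgroup.subset_closure ?_)
            exact ⟨(w₀, s₀), ⟨hw₀, hs₀⟩, rfl⟩
          | one => rw [commutatorElement_one_right]; exact one_mem _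
          | mul w w' hwmem hw'mem pw pw' =>
            have key : ⁅π w₀, w * w'⁆ = ⁅π w₀, w⁆ * (w * ⁅π w₀, w'⁆ * w⁻¹) := by group
            rw [key, conj_central (hMc _ hπw₀ w') w]
            exact mul_mem pw pw'
          | inv w hwmem pw =>
            have key : ⁅π w₀, w⁻¹⁆ = w⁻¹ * ⁅π w₀, w⁆⁻¹ * w := by group
            have : w⁻¹ * ⁅π w₀, w⁆⁻¹ * w = ⁅π w₀, w⁆⁻¹ := by
              have h4 := conj_central (Subgroup.inv_mem _ (hMc _ hπw₀ w)) w⁻¹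
              rw [Subgroup.mem_center_iff.mp (Subgroup.inv_mem _ (hMc _ hπw₀ w)) w⁻¹,
                inv_mul_cancel_right]
            rw [key, this]
            exact inv_mem pw
        | inr h =>
          intro w
          have h5 : ⁅g, w⁆ = 1 := by
            refine commutatorElement_eq_one_iff_commute.mpr ?_
            exact (Subgroup.mem_center_iff.mp (hcent h) w).symm
          rw [h5]; exact one_mem _
      | one =>
        intro w
        rw [commutatorElement_one_left]; exact one_mem _
      | mul x y hx hy px py =>
        intro w
        have hy' := hback y hy
        have key : ⁅x * y, w⁆ = (x * ⁅y, w⁆ * x⁻¹) * ⁅x, w⁆ := by group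
        rw [key, conj_central (hMc _ hy' w) x]
        exact mul_mem (py w) (px w)
      | inv x hx px =>
        intro w
        have hx' := hback x hx
        have key : ⁅x⁻¹, w⁆ = x⁻¹ * ⁅x, w⁆⁻¹ * x := by group
        have : x⁻¹ * ⁅x, w⁆⁻¹ * x = ⁅x, w⁆⁻¹ := by
          have h4 := conj_central (Subgroup.inv_mem _ (hMc _ hx' w)) x⁻¹
          rw [Subgroup.mem_center_iff.mp (Subgroup.inv_mem _ (hMc _ hx' w)) x⁻¹,
            inv_mul_cancel_right]
        rw [key, this]
        exact inv_mem (px w)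
    have h6 := Subgroup.map_le_map_iff.mp hmaple
    rwa [QuotientGroup.ker_mk'] at h6

end Aux

section Layer

variable {N : Type*} [Group N]

/-- Each layer `γ_k(N) / (K_k ⊔ γ_{k+1}(N))` is finite. -/
private lemma layer_relindex {K : Subgroup N} (hK : K.Normal) (m : ℕ) (hm0 : m ≠ 0)
    (hm : ∀ g : N, g ^ m ∈ K) {S : Set N} (hSfin : S.Finite)
    (hS : Subgroup.closure S = ⊤) (k : ℕ) :
    (lcsIn K k ⊔ lowerCentralSeries N (k + 1)).relIndex (lowerCentralSeries N k) ≠ 0 := by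
  haveI := lcsIn_normal hK k
  set B : Subgroup N := lowerCentralSeries N k with hBdef
  set Tk : Subgroup N := lcsIn K k ⊔ lowerCentralSeries N (k + 1) with hTkdef
  haveI : Tk.Normal := Subgroup.sup_normal _ _
  set T' : Subgroup B := Tk.subgroupOf B with hT'def
  haveI : T'.Normal := Subgroup.normal_subgroupOf
  -- the quotient
  have hTkB : Tk ≤ B := sup_le (lcsIn_le_lcs K k) (lowerCentralSeries_antitone (Nat.le_succ _))
  -- commutativity
  have hcomm : ∀ a b : B ⧸ T', a * b = b * a := by
    intro a b
    induction a using QuotientGroup.induction_on with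
    | H x =>
      induction b using QuotientGroup.induction_on with
      | H y =>
        rw [← QuotientGroup.mk_mul, ← QuotientGroup.mk_mul]
        apply inv_mul_eq_one.mp
        rw [← QuotientGroup.mk_inv, ← QuotientGroup.mk_mul]
        rw [QuotientGroup.eq_one_iff]
        rw [Subgroup.mem_subgroupOf]
        have hco : (((x * y)⁻¹ * (y * x) : B) : N) = ⁅(y : N)⁻¹, (x : N)⁻¹⁆ := by
          push_cast
          group
        rw [hco]
        have h7 : ⁅(y : N)⁻¹, (x : N)⁻¹⁆ ∈ ⁅B, (⊤ : Subgroup N)⁆ :=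
          Subgroup.commutator_mem_commutator (inv_mem y.2) (mem_top _)
        rw [← lcs_succ'] at h7
        exact Subgroup.mem_sup_right h7
  -- torsion
  have htor : ∀ q : B ⧸ T', q ^ m ^ (k + 1) = 1 := by
    intro q
    induction q using QuotientGroup.induction_on with
    | H x =>
      have hpow : ((x : B ⧸ T') ^ m ^ (k + 1)) = (((x ^ m ^ (k + 1) : B) : B ⧸ T')) :=
        (map_pow (QuotientGroup.mk' T') x (m ^ (k + 1))).symm
      rw [hpow, QuotientGroup.eq_one_iff, Subgroup.mem_subgroupOf]
      push_cast
      exact pow_mem_lcsIn_sup hK m hm k (x : N) x.2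
  -- finite generation
  have hBsup : B = Subgroup.closure (wSet S k) ⊔ Tk := by
    have h8 := lcs_eq_closure_sup S hS k
    rw [hTkdef, ← sup_assoc, sup_comm (Subgroup.closure (wSet S k)) (lcsIn K k), sup_assoc,
      ← h8, ← hBdef, sup_eq_right.mpr (lcsIn_le_lcs K k)]
  set C : Subgroup N := Subgroup.closure (wSet S k) with hCdef
  have hCB : C ≤ B := (Subgroup.closure_le _).mpr (wSet_subset S k)
  have hCfg : C.FG := (Subgroup.fg_iff C).mpr ⟨wSet S k, rfl, wSet_finite hSfin k⟩
  haveI : Group.FG C := (Group.fg_iff_subgroup_fg C).mpr hCfg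
  set f : C →* B ⧸ T' := (QuotientGroup.mk' T').comp (Subgroup.inclusion hCB) with hfdef
  have hfsurj : Function.Surjective f := by
    intro q
    induction q using QuotientGroup.induction_on with
    | H x =>
      have hx : (x : N) ∈ C ⊔ Tk := by rw [← hBsup]; exact x.2
      rw [← SetLike.mem_coe, Subgroup.mul_normal] at hx
      obtain ⟨c, hc, t, ht, hct⟩ := hx
      refine ⟨⟨c, hc⟩, ?_⟩
      have hxeq : x = (⟨c, hCB hc⟩ : B) * ⟨t, hTkB ht⟩ := by
        ext
        exact hct.symm
      have h1 : f ⟨c, hc⟩ = (((⟨c, hCB hc⟩ : B) : B ⧸ T')) := rfl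
      have h2 : ((⟨t, hTkB ht⟩ : B) : B ⧸ T') = 1 := by
        rw [QuotientGroup.eq_one_iff, Subgroup.mem_subgroupOf]
        exact ht
      rw [h1, hxeq, QuotientGroup.mk_mul, h2, mul_one]
  haveI : Group.FG (B ⧸ T') := Group.fg_of_surjective hfsurj
  letI : CommGroup (B ⧸ T') := { (inferInstance : Group (B ⧸ T')) with mul_comm := hcomm }
  have htor' : Monoid.IsTorsion (B ⧸ T') := by
    intro q
    refine isOfFinOrder_iff_pow_eq_one.mpr ⟨m ^ (k + 1), ?_, htor q⟩
    exact Nat.pos_of_ne_zero (pow_ne_zero _ hm0)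
  have hfin : Finite (B ⧸ T') := CommGroup.finite_of_fg_torsion _ htor'
  exact Subgroup.index_ne_zero_of_finite

end Layer

theorem lcs_finiteIndex_aux {N : Type*} [Group N] [Group.IsNilpotent N]
    (hFG : Group.FG N) (H : Subgroup N) [H.FiniteIndex] (j : ℕ) (hj : 1 ≤ j) :
    (((lowerCentralSeries H (j - 1)).map H.subtype).subgroupOf
      (lowerCentralSeries N (j - 1))).FiniteIndex := by
  set i := j - 1 with hidef
  set K : Subgroup N := H.normalCore with hKdef
  haveI hKn : K.Normal := H.normalCore_normal
  haveI : K.FiniteIndex := Subgroup.finiteIndex_normalCore H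
  set m := K.index with hmdef
  have hm0 : m ≠ 0 := Subgroup.FiniteIndex.index_ne_zero
  have hm : ∀ g : N, g ^ m ∈ K := fun g => K.pow_index_mem g
  obtain ⟨S, hS, hSfin⟩ := Group.fg_iff.mp hFG
  obtain ⟨c, hc⟩ := nilpotent_iff_lowerCentralSeries.mp ‹Group.IsNilpotent N›
  have chain : ∀ d : ℕ,
      (lcsIn K i ⊔ lowerCentralSeries N (i + d)).relIndex (lowerCentralSeries N i) ≠ 0 := by
    intro d
    induction d with
    | zero =>
      rw [Nat.add_zero, sup_eq_right.mpr (lcsIn_le_lcs K i), Subgroup.relIndex_self]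
      exact one_ne_zero
    | succ d ih =>
      have hAB : lcsIn K i ⊔ lowerCentralSeries N (i + (d + 1))
          ≤ lcsIn K i ⊔ lowerCentralSeries N (i + d) :=
        sup_le_sup_left (lowerCentralSeries_antitone (by omega)) _
      have hB : lcsIn K i ⊔ lowerCentralSeries N (i + d) ≤ lowerCentralSeries N i :=
        sup_le (lcsIn_le_lcs K i) (lowerCentralSeries_antitone (Nat.le_add_right _ _))
      rw [← Subgroup.relIndex_mul_relIndex _ _ _ hAB hB]
      refine Nat.mul_ne_zero ?_ ih
      haveI := lcsIn_normal hKn i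
      haveI : (lcsIn K i ⊔ lowerCentralSeries N (i + (d + 1))).Normal :=
        Subgroup.sup_normal _ _
      have hstep : lowerCentralSeries N (i + (d + 1)) ≤ lowerCentralSeries N (i + d) :=
        lowerCentralSeries_antitone (by omega)
      have hBeq : lcsIn K i ⊔ lowerCentralSeries N (i + d)
          = lowerCentralSeries N (i + d) ⊔ (lcsIn K i ⊔ lowerCentralSeries N (i + (d + 1))) := by
        rw [← sup_assoc, sup_comm (lowerCentralSeries N (i + d)) (lcsIn K i), sup_assoc,
          sup_eq_left.mpr hstep]
      rw [hBeq, Subgroup.relIndex_sup_right]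
      have hle : lcsIn K (i + d) ⊔ lowerCentralSeries N (i + d + 1)
          ≤ lcsIn K i ⊔ lowerCentralSeries N (i + (d + 1)) :=
        sup_le_sup_right (lcsIn_le_of_le hKn (Nat.le_add_right i d)) _
      have hlayer := layer_relindex hKn m hm0 hm hSfin hS (i + d)
      intro h0
      have hdvd := Subgroup.relIndex_dvd_of_le_left (lowerCentralSeries N (i + d)) hle
      rw [h0] at hdvd
      exact hlayer (zero_dvd_iff.mp hdvd)
  have hKrel : (lcsIn K i).relIndex (lowerCentralSeries N i) ≠ 0 := by
    have h9 := chain c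
    have hbot : lowerCentralSeries N (i + c) = ⊥ :=
      le_bot_iff.mp (hc ▸ lowerCentralSeries_antitone (Nat.le_add_left c i))
    rwa [hbot, sup_bot_eq] at h9
  constructor
  rw [lcsIn_map H i]
  show (lcsIn H i).relIndex (lowerCentralSeries N i) ≠ 0
  have hle2 : lcsIn K i ≤ lcsIn H i := lcsIn_mono H.normalCore_le i
  have hdvd := Subgroup.relIndex_dvd_of_le_left (lowerCentralSeries N i) hle2
  intro h0
  rw [h0] at hdvd
  exact hKrel (zero_dvd_iff.mp hdvd)

end Port

/-- Let `N` be a finitely generated nilpotent group and `H` a finite-index subgroup.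
Then for every `j ≥ 1` the subgroup `H_j` has finite index in `N_j`, where `H_j` and `N_j`
are the `j`-th terms of the respective lower central series (Mathlib indexing: `j-1`). -/
theorem lcs_finiteIndex_of_finiteIndex {N : Type*} [Group N] [Group.IsNilpotent N]
    (hFG : Group.FG N) (H : Subgroup N) [H.FiniteIndex] (j : ℕ) (hj : 1 ≤ j) :
    ((((⊤ : Subgroup H).lowerCentralSeries (j - 1)).map H.subtype).subgroupOf
      ((⊤ : Subgroup N).lowerCentralSeries (j - 1))).FiniteIndex := by
  exact Port.lcs_finiteIndex_aux hFG H j hj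
end

section
/- Let N be a finitely generated abelian group, H a finite-index subgroup, Z an abelian group, and α : N^j → Z a map that is a group homomorphism in each variable separately. Let α(N) be the subgroup of Z generated by all values α(n_1,…,n_j) with n_i ∈ N, and α(H) the subgroup generated by values on H^j. Then α(H) has finite index in α(N). -/
/-- Let `N` be a finitely generated abelian group, `H` a finite-index subgroup, `Z` an
abelian group, and `α : N^j → Z` a homomorphism in each variable separately. Then the
subgroup of `Z` generated by the values of `α` on `H^j` has finite index in the subgroup
generated by all values of `α`. -/
theorem multilinear_image_finiteIndex {N Z : Type*} [CommGroup N] [CommGroup Z]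
    (hFG : Group.FG N) (H : Subgroup N) [H.FiniteIndex] (j : ℕ)
    (α : (Fin j → N) → Z)
    (hα : ∀ (x : Fin j → N) (i : Fin j) (u v : N),
      α (Function.update x i (u * v)) = α (Function.update x i u) * α (Function.update x i v)) :
    ((Subgroup.closure {z : Z | ∃ x : Fin j → N, (∀ i, x i ∈ H) ∧ α x = z}).subgroupOf
      (Subgroup.closure (Set.range α))).FiniteIndex := by
  classical
  set A := Subgroup.closure (Set.range α) with hA
  set B := Subgroup.closure {z : Z | ∃ x : Fin j → N, (∀ i, x i ∈ H) ∧ α x = z} with hB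
  -- α sends 1 to 1 in each coordinate
  have hone : ∀ (x : Fin j → N) (i : Fin j), α (Function.update x i 1) = 1 := by
    intro x i
    have h := hα x i 1 1
    rw [one_mul] at h
    exact mul_eq_left.mp h.symm
  -- α respects inverses in each coordinate
  have hinv : ∀ (x : Fin j → N) (i : Fin j) (u : N),
      α (Function.update x i u⁻¹) = (α (Function.update x i u))⁻¹ := by
    intro x i u
    have h := hα x i u u⁻¹
    rw [mul_inv_cancel, hone] at h
    exact eq_inv_of_mul_eq_one_right h.symm
  -- α respects powers in each coordinate
  have hpow : ∀ (x : Fin j → N) (i : Fin j) (u : N) (m : ℕ),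
      α (Function.update x i (u ^ m)) = α (Function.update x i u) ^ m := by
    intro x i u m
    induction m with
    | zero => simpa using hone x i
    | succ m ih => rw [pow_succ, hα, ih, pow_succ]
  set n := H.index with hn
  -- key power identity
  have key : ∀ (s : Finset (Fin j)) (x : Fin j → N),
      α (fun i => if i ∈ s then x i ^ n else x i) = α x ^ n ^ s.card := by
    intro s
    induction s using Finset.induction_on with
    | empty => intro x; simp
    | @insert a s ha ih =>
      intro x
      set y : Fin j → N := fun i => if i ∈ s then x i ^ n else x i with hy
      have hya : y a = x a := by simp [hy, ha]
      have h1 : (fun i => if i ∈ insert a s then x i ^ n else x i)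
          = Function.update y a (y a ^ n) := by
        funext i
        by_cases hi : i = a
        · subst hi; simp [hya]
        · simp [Function.update, hi, hy]
      rw [h1, hpow, Function.update_eq_self, ih, ← pow_mul,
        Finset.card_insert_of_notMem ha, pow_succ, pow_mul]
  -- every element of A raised to n ^ j lies in B
  have hpowmem : ∀ z ∈ A, z ^ n ^ j ∈ B := by
    intro z hz
    refine Subgroup.closure_induction (p := fun z _ => z ^ n ^ j ∈ B) ?_ ?_ ?_ ?_ hz
    · rintro _ ⟨x, rfl⟩
      have hkey := key Finset.univ x
      simp only [Finset.mem_univ, if_true, Finset.card_univ, Fintype.card_fin] at hkey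
      rw [← hkey]
      exact Subgroup.subset_closure
        ⟨fun i => x i ^ n, fun i => H.pow_index_mem (x i), rfl⟩
    · simpa using one_mem B
    · intro u v _ _ hu hv
      rw [mul_pow]; exact mul_mem hu hv
    · intro u _ hu
      rw [inv_pow]; exact inv_mem hu
  -- A is finitely generated
  obtain ⟨S, hStop, hSfin⟩ := Group.fg_iff.mp hFG
  set T : Set Z := α '' {x : Fin j → N | ∀ i, x i ∈ S} with hT
  have hTfin : T.Finite := by
    apply Set.Finite.image
    have : {x : Fin j → N | ∀ i, x i ∈ S} ⊆ Set.pi Set.univ (fun _ => S) := by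
      intro x hx i _; exact hx i
    exact (Set.Finite.pi fun _ => hSfin).subset this
  have main : ∀ (k : ℕ) (x : Fin j → N),
      (∀ i : Fin j, (i : ℕ) < k → x i ∈ Subgroup.closure S) →
      (∀ i : Fin j, k ≤ (i : ℕ) → x i ∈ S) → α x ∈ Subgroup.closure T := by
    intro k
    induction k with
    | zero =>
      intro x _ h2
      exact Subgroup.subset_closure ⟨x, fun i => h2 i (Nat.zero_le _), rfl⟩
    | succ k ih =>
      intro x h1 h2
      by_cases hk : k < j
      · set i0 : Fin j := ⟨k, hk⟩ with hi0
        have hx0 : x i0 ∈ Subgroup.closure S := h1 i0 (Nat.lt_succ_self k)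
        have hupdate : ∀ u ∈ Subgroup.closure S,
            α (Function.update x i0 u) ∈ Subgroup.closure T := by
          intro u hu
          refine Subgroup.closure_induction
            (p := fun u _ => α (Function.update x i0 u) ∈ Subgroup.closure T) ?_ ?_ ?_ ?_ hu
          · intro u huS
            apply ih
            · intro i hi
              have hne : i ≠ i0 := by
                intro h; rw [h] at hi; simp [hi0] at hi
              rw [Function.update_of_ne hne]
              exact h1 i (Nat.lt_succ_of_lt hi)
            · intro i hi
              by_cases hii : i = i0
              · subst hii; simpa using huS
              · rw [Function.update_of_ne hii]
                apply h2
                have : (i : ℕ) ≠ k := by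
                  intro h
                  apply hii
                  exact Fin.ext h
                omega
          · show α (Function.update x i0 1) ∈ Subgroup.closure T
            rw [hone]; exact one_mem _
          · intro u v _ _ huT hvT
            show α (Function.update x i0 (u * v)) ∈ Subgroup.closure T
            rw [hα]; exact mul_mem huT hvT
          · intro u _ huT
            show α (Function.update x i0 u⁻¹) ∈ Subgroup.closure T
            rw [hinv]; exact inv_mem huT
        have := hupdate (x i0) hx0
        rwa [Function.update_eq_self] at this
      · apply ih x
        · intro i hi; exact h1 i (Nat.lt_succ_of_lt hi)
        · intro i hi
          exfalso
          have := i.isLt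
          omega
  have hrange : Set.range α ⊆ (Subgroup.closure T : Set Z) := by
    rintro _ ⟨x, rfl⟩
    refine main j x (fun i _ => ?_) (fun i hi => absurd i.isLt (not_lt.mpr hi))
    rw [hStop]; exact Subgroup.mem_top _
  have hAT : A = Subgroup.closure T := by
    apply le_antisymm
    · exact Subgroup.closure_le _ |>.mpr hrange
    · apply Subgroup.closure_le _ |>.mpr
      intro z hz
      obtain ⟨x, _, rfl⟩ := hz
      exact Subgroup.subset_closure ⟨x, rfl⟩
  have hAfg : Group.FG ↥A := by
    rw [Group.fg_iff_subgroup_fg]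
    exact (Subgroup.fg_iff A).mpr ⟨T, hAT.symm, hTfin⟩
  -- the quotient is torsion
  set K := B.subgroupOf A with hK
  have htor : Monoid.IsTorsion (↥A ⧸ K) := by
    intro q
    induction q using QuotientGroup.induction_on with
    | H a =>
      rw [isOfFinOrder_iff_pow_eq_one]
      refine ⟨n ^ j, pow_pos (Nat.pos_of_ne_zero Subgroup.FiniteIndex.index_ne_zero) j, ?_⟩
      rw [← QuotientGroup.mk_pow, QuotientGroup.eq_one_iff]
      rw [Subgroup.mem_subgroupOf]
      push_cast
      exact hpowmem (a : Z) a.2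
  haveI : Group.FG (↥A ⧸ K) := by
    haveI := hAfg
    infer_instance
  haveI : Finite (↥A ⧸ K) := CommGroup.finite_of_fg_torsion _ htor
  exact Subgroup.finiteIndex_of_finite_quotient
end
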